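/- arXiv:1709.06834 — 3 statements merged into one kernel-verified Lean document; each statement's English description precedes it below -/
import Mathlib

section
/- Let d > 0 and let μ be a locally finite Borel measure on ℝ^n that is absolutely continuous with respect to Lebesgue measure and satisfies μ(t • A) = t^d · μ(A) for every t > 0 and every Borel set A. Let C ⊆ ℝ^n be compact and let (B_L)_{L>0} be a family of closed convex subsets of ℝ^n such that (1/L) • B_L ⊆ C for all L. Let B be a closed convex set such that: (i) for every x in the interior of B, x ∈ (1/L) • B_L for all sufficiently large L; and (ii) for every x ∉ B, x ∉ (1/L) • B_L for all sufficiently large L. Then lim_{L→∞} μ(B_L) / L^d = μ(B). -/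
open MeasureTheory Filter Topology Pointwise

/-- Let `μ` be a locally finite Borel measure on `ℝ^n`, absolutely continuous with respect
to Lebesgue measure and homogeneous of degree `d > 0`.  If `(B L)` is a family of closed
convex sets whose rescalings `L⁻¹ • B L` stay in a fixed compact set and converge pointwise
to a closed convex set `B`, then `μ (B L) / L ^ d → μ B` as `L → ∞`. -/
theorem homogeneous_measure_tendsto_of_convex_rescaled_limit (n : ℕ) (d : ℝ) (hd : 0 < d)
    (μ : Measure (EuclideanSpace ℝ (Fin n)))
    [IsLocallyFiniteMeasure μ]
    (hμ_ac : μ ≪ volume)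
    (hμ : ∀ t : ℝ, 0 < t → ∀ A : Set (EuclideanSpace ℝ (Fin n)), MeasurableSet A →
      μ (t • A) = ENNReal.ofReal (t ^ d) * μ A)
    (C : Set (EuclideanSpace ℝ (Fin n))) (hC : IsCompact C)
    (B : ℝ → Set (EuclideanSpace ℝ (Fin n)))
    (hB_closed : ∀ L : ℝ, 0 < L → IsClosed (B L))
    (hB_convex : ∀ L : ℝ, 0 < L → Convex ℝ (B L))
    (hB_sub : ∀ L : ℝ, 0 < L → (L⁻¹ • B L) ⊆ C)
    (Blim : Set (EuclideanSpace ℝ (Fin n)))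
    (hBlim_closed : IsClosed Blim)
    (hBlim_convex : Convex ℝ Blim)
    (h_in : ∀ x ∈ interior Blim, ∀ᶠ L in atTop, x ∈ (L⁻¹ • B L))
    (h_out : ∀ x ∉ Blim, ∀ᶠ L in atTop, x ∉ (L⁻¹ • B L)) :
    Tendsto (fun L : ℝ => μ (B L) / ENNReal.ofReal (L ^ d)) atTop (𝓝 (μ Blim)) := by
  set As : ℝ → Set (EuclideanSpace ℝ (Fin n)) :=
    fun L => if 0 < L then L⁻¹ • B L else ∅ with hAs
  have hAs_eq : ∀ L : ℝ, 0 < L → As L = L⁻¹ • B L := fun L hL => if_pos hL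
  have hAs_mble : ∀ L : ℝ, MeasurableSet (As L) := by
    intro L
    by_cases hL : 0 < L
    · rw [hAs_eq L hL]
      exact ((hB_closed L hL).smul_of_ne_zero (inv_ne_zero hL.ne')).measurableSet
    · simp [hAs, hL]
  -- frontier of Blim is μ-null
  have h_front : μ (frontier Blim) = 0 :=
    hμ_ac (hBlim_convex.addHaar_frontier volume)
  -- pointwise a.e. convergence of indicators
  have h_lim : ∀ᵐ x ∂μ, ∀ᶠ L in atTop, x ∈ As L ↔ x ∈ Blim := by
    rw [ae_iff]
    refine measure_mono_null ?_ h_front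
    intro x hx
    simp only [Set.mem_setOf_eq] at hx
    rw [frontier_eq_closure_inter_closure, hBlim_closed.closure_eq]
    by_contra hxf
    simp only [Set.mem_inter_iff, not_and_or] at hxf
    rcases hxf with hxB | hxI
    · -- x ∉ Blim
      apply hx
      filter_upwards [h_out x hxB, eventually_gt_atTop (0 : ℝ)] with L h1 h2
      rw [hAs_eq L h2]
      exact ⟨fun h => absurd h h1, fun h => absurd h hxB⟩
    · -- x ∈ interior Blim
      have hxint : x ∈ interior Blim := by
        have := hxI
        rwa [← Set.mem_compl_iff, ← interior_compl, compl_compl] at this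
      apply hx
      filter_upwards [h_in x hxint, eventually_gt_atTop (0 : ℝ)] with L h1 h2
      rw [hAs_eq L h2]
      exact ⟨fun _ => interior_subset hxint, fun _ => h1⟩
  have h_main : Tendsto (fun L => μ (As L)) atTop (𝓝 (μ Blim)) := by
    refine tendsto_measure_of_ae_tendsto_indicator atTop hBlim_closed.measurableSet hAs_mble
      hC.isClosed.measurableSet hC.measure_lt_top.ne ?_ h_lim
    filter_upwards [eventually_gt_atTop (0 : ℝ)] with L hL
    rw [hAs_eq L hL]
    exact hB_sub L hL
  refine h_main.congr' ?_
  filter_upwards [eventually_gt_atTop (0 : ℝ)] with L hL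
  have hLd : 0 < L ^ d := Real.rpow_pos_of_pos hL d
  have hBL : B L = L • As L := by
    rw [hAs_eq L hL, smul_inv_smul₀ hL.ne']
  rw [hBL, hμ L hL _ (hAs_mble L),
    mul_comm, mul_div_assoc,
    ENNReal.div_self (by simpa using hLd) ENNReal.ofReal_ne_top, mul_one]
end

section
/- Let n ≥ 1, let d > 0, let (x_i)_{i∈ℕ} be a sequence in ℝ^n, and let ν be a locally finite Borel measure on ℝ^n satisfying ν(t • A) = t^d · ν(A) for every t > 0 and every Borel set A. Assume: (i) for every L > 0 and every compact C ⊆ ℝ^n the set {i | x_i ∈ L • C} is finite; (ii) for every continuous compactly supported g : ℝ^n → ℝ one has lim_{L→∞} L^{−d} ∑_i g(x_i / L) = ∫ g dν. Let f : ℝ^n → ℝ be continuous, positively homogeneous of degree 1 (f(t • x) = t · f(x) for t > 0), and positive on ℝ^n \ {0}. Then lim_{L→∞} #{i | f(x_i) ≤ L} / L^d = ν({x | f(x) ≤ 1}). -/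
open MeasureTheory Filter Topology Pointwise

/-!
Homogeneity gives `{f ≤ L} = L • K` with `K = {f ≤ 1}`, so `#{i | f (xᵢ) ≤ L} / L^d` is the
mass that the rescaled counting measure gives to `K`, and positivity makes every sublevel set
compact. Sandwich the indicator of `K` between continuous cutoffs that are `1` on `{f ≤ t}`,
`t < 1`, resp. vanish off `{f ≤ t}`, `t > 1`: vague convergence bounds the limit points of the
count by `ν {f ≤ t} = t^d ν K`, and these tend to `ν K` as `t → 1`.
-/

theorem tendsto_of_forall_exists_tendsto_le {α β : Type*} [TopologicalSpace β] [LinearOrder β]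
    [OrderTopology β] {l : Filter α} {F : α → β} {c : β}
    (hlow : ∀ a < c, ∃ g : α → β, ∃ b, a < b ∧ Tendsto g l (𝓝 b) ∧ ∀ᶠ x in l, g x ≤ F x)
    (hup : ∀ a, c < a → ∃ g : α → β, ∃ b, b < a ∧ Tendsto g l (𝓝 b) ∧ ∀ᶠ x in l, F x ≤ g x) :
    Tendsto F l (𝓝 c) := by
  refine tendsto_order.2 ⟨fun a ha => ?_, fun a ha => ?_⟩
  · obtain ⟨g, b, hab, hg, hgF⟩ := hlow a ha
    filter_upwards [(tendsto_order.1 hg).1 a hab, hgF] with x hx hxF using hx.trans_le hxF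
  · obtain ⟨g, b, hba, hg, hFg⟩ := hup a ha
    filter_upwards [(tendsto_order.1 hg).2 a hba, hFg] with x hx hFx using hFx.trans_lt hx

theorem tendsto_rpow_mul_nhds_one (d c : ℝ) :
    Tendsto (fun t : ℝ => t ^ d * c) (𝓝 1) (𝓝 c) := by
  simpa using (Real.continuousAt_rpow_const 1 d (Or.inl one_ne_zero)).tendsto.mul_const c

theorem exists_mem_Ioo_lt_rpow_mul {a c : ℝ} (d : ℝ) (ha : a < c) :
    ∃ t ∈ Set.Ioo 0 1, a < t ^ d * c := by
  have h := (tendsto_rpow_mul_nhds_one d c).mono_left (nhdsWithin_le_nhds (s := Set.Iio 1))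
  obtain ⟨t, hat, ht⟩ := ((h.eventually (lt_mem_nhds ha)).and (Ioo_mem_nhdsLT one_pos)).exists
  exact ⟨t, ht, hat⟩

theorem exists_one_lt_rpow_mul_lt {a c : ℝ} (d : ℝ) (ha : c < a) :
    ∃ t, 1 < t ∧ t ^ d * c < a := by
  have h := (tendsto_rpow_mul_nhds_one d c).mono_left (nhdsWithin_le_nhds (s := Set.Ioi 1))
  obtain ⟨t, hat, ht⟩ := ((h.eventually (gt_mem_nhds ha)).and self_mem_nhdsWithin).exists
  exact ⟨t, ht, hat⟩

section Homogeneous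

variable {E : Type*} [NormedAddCommGroup E] [NormedSpace ℝ E] {f : E → ℝ}

theorem map_zero_of_pos_homogeneous (hf_hom : ∀ t : ℝ, 0 < t → ∀ y, f (t • y) = t * f y) :
    f 0 = 0 := by
  have h := hf_hom 2 two_pos 0
  rw [smul_zero] at h
  linarith

theorem apply_inv_smul_le_iff (hf_hom : ∀ t : ℝ, 0 < t → ∀ y, f (t • y) = t * f y) {L : ℝ}
    (hL : 0 < L) (y : E) (t : ℝ) : f (L⁻¹ • y) ≤ t ↔ f y ≤ L * t := by
  rw [hf_hom L⁻¹ (inv_pos.2 hL), inv_mul_le_iff₀ hL]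

theorem smul_setOf_le_one (hf_hom : ∀ t : ℝ, 0 < t → ∀ y, f (t • y) = t * f y) {t : ℝ}
    (ht : 0 < t) : t • {y : E | f y ≤ 1} = {y | f y ≤ t} := by
  ext y
  rw [Set.mem_smul_set_iff_inv_smul_mem₀ ht.ne', Set.mem_ofPred_eq, Set.mem_ofPred_eq,
    apply_inv_smul_le_iff hf_hom ht, mul_one]

theorem exists_pos_mul_norm_le [ProperSpace E] (hf_cont : Continuous f)
    (hf_hom : ∀ t : ℝ, 0 < t → ∀ y, f (t • y) = t * f y) (hf_pos : ∀ y : E, y ≠ 0 → 0 < f y) :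
    ∃ m > 0, ∀ y, m * ‖y‖ ≤ f y := by
  rcases subsingleton_or_nontrivial E with hE | hE
  · exact ⟨1, one_pos, fun y => by simp [Subsingleton.elim y 0, map_zero_of_pos_homogeneous hf_hom]⟩
  obtain ⟨z, hz, hz_min⟩ := (isCompact_sphere (0 : E) 1).exists_isMinOn
    (NormedSpace.sphere_nonempty.2 zero_le_one) hf_cont.continuousOn
  refine ⟨f z, hf_pos z (ne_zero_of_mem_unit_sphere ⟨z, hz⟩), fun y => ?_⟩
  rcases eq_or_ne y 0 with rfl | hy
  · simp [map_zero_of_pos_homogeneous hf_hom]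
  have hy_pos : 0 < ‖y‖ := norm_pos_iff.2 hy
  have hu : ‖y‖⁻¹ • y ∈ Metric.sphere (0 : E) 1 := by
    simp [norm_smul, hy_pos.ne']
  calc f z * ‖y‖ ≤ f (‖y‖⁻¹ • y) * ‖y‖ := mul_le_mul_of_nonneg_right (hz_min hu) hy_pos.le
    _ = f y := by rw [hf_hom _ (inv_pos.2 hy_pos)]; field_simp

theorem isCompact_setOf_le [ProperSpace E] (hf_cont : Continuous f)
    (hf_hom : ∀ t : ℝ, 0 < t → ∀ y, f (t • y) = t * f y) (hf_pos : ∀ y : E, y ≠ 0 → 0 < f y)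
    (c : ℝ) : IsCompact {y : E | f y ≤ c} := by
  obtain ⟨m, hm, hfm⟩ := exists_pos_mul_norm_le hf_cont hf_hom hf_pos
  refine (isCompact_closedBall (0 : E) (c / m)).of_isClosed_subset
    (isClosed_le hf_cont continuous_const) fun y hy => ?_
  rw [mem_closedBall_zero_iff, le_div_iff₀ hm, mul_comm]
  exact (hfm y).trans hy

end Homogeneous

section Cutoff

variable {X : Type*} {f : X → ℝ} {a b : ℝ}

noncomputable def levelCutoff (f : X → ℝ) (a b : ℝ) (y : X) : ℝ :=
  max 0 (min 1 ((b - f y) / (b - a)))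

theorem levelCutoff_nonneg (y : X) : 0 ≤ levelCutoff f a b y :=
  le_max_left _ _

theorem levelCutoff_le_one (y : X) : levelCutoff f a b y ≤ 1 :=
  max_le zero_le_one (min_le_left _ _)

theorem levelCutoff_eq_one (hab : a < b) {y : X} (hy : f y ≤ a) : levelCutoff f a b y = 1 := by
  have h : 1 ≤ (b - f y) / (b - a) := by rw [one_le_div (sub_pos.2 hab)]; linarith
  rw [levelCutoff, min_eq_left h, max_eq_right zero_le_one]

theorem levelCutoff_eq_zero (hab : a ≤ b) {y : X} (hy : b ≤ f y) : levelCutoff f a b y = 0 :=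
  max_eq_left <| (min_le_right _ _).trans <|
    div_nonpos_of_nonpos_of_nonneg (sub_nonpos.2 hy) (sub_nonneg.2 hab)

theorem indicator_le_levelCutoff (hab : a < b) :
    {y | f y ≤ a}.indicator (1 : X → ℝ) ≤ levelCutoff f a b :=
  Set.indicator_le' (fun _ hy => (levelCutoff_eq_one hab hy).ge) fun _ _ => levelCutoff_nonneg _

theorem levelCutoff_le_indicator (hab : a ≤ b) :
    levelCutoff f a b ≤ {y | f y ≤ b}.indicator (1 : X → ℝ) :=
  Set.le_indicator (fun _ _ => levelCutoff_le_one _)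
    fun _ hy => (levelCutoff_eq_zero hab (le_of_not_ge hy)).le

variable [TopologicalSpace X]

theorem continuous_levelCutoff (hf : Continuous f) : Continuous (levelCutoff f a b) :=
  continuous_const.max (continuous_const.min ((continuous_const.sub hf).div_const _))

theorem hasCompactSupport_levelCutoff (hf : Continuous f) (hab : a ≤ b)
    (hK : IsCompact {y | f y ≤ b}) : HasCompactSupport (levelCutoff f a b) :=
  .intro' hK (isClosed_le hf continuous_const) fun _ hy =>
    levelCutoff_eq_zero hab (le_of_not_ge hy)

variable [MeasurableSpace X] [OpensMeasurableSpace X] {μ : Measure X} [IsFiniteMeasureOnCompacts μ]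

theorem integrable_levelCutoff (hf : Continuous f) (hab : a ≤ b) (hK : IsCompact {y | f y ≤ b}) :
    Integrable (levelCutoff f a b) μ :=
  (continuous_levelCutoff hf).integrable_of_hasCompactSupport
    (hasCompactSupport_levelCutoff hf hab hK)

theorem integrable_indicator_one_setOf_le (hf : Continuous f) (hK : IsCompact {y | f y ≤ a}) :
    Integrable ({y | f y ≤ a}.indicator (1 : X → ℝ)) μ :=
  (integrable_indicator_iff (isClosed_le hf continuous_const).measurableSet).2
    (integrableOn_const hK.measure_lt_top.ne)

theorem measureReal_le_integral_levelCutoff (hf : Continuous f) (hab : a < b)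
    (hK : IsCompact {y | f y ≤ b}) :
    μ.real {y | f y ≤ a} ≤ ∫ y, levelCutoff f a b y ∂μ := by
  have hKa : IsCompact {y | f y ≤ a} :=
    hK.of_isClosed_subset (isClosed_le hf continuous_const) fun _ hy => hy.trans hab.le
  rw [← integral_indicator_one (isClosed_le hf continuous_const).measurableSet]
  exact integral_mono (integrable_indicator_one_setOf_le hf hKa)
    (integrable_levelCutoff hf hab.le hK) (indicator_le_levelCutoff hab)

theorem integral_levelCutoff_le_measureReal (hf : Continuous f) (hab : a ≤ b)
    (hK : IsCompact {y | f y ≤ b}) :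
    ∫ y, levelCutoff f a b y ∂μ ≤ μ.real {y | f y ≤ b} := by
  rw [← integral_indicator_one (isClosed_le hf continuous_const).measurableSet]
  exact integral_mono (integrable_levelCutoff hf hab hK) (integrable_indicator_one_setOf_le hf hK)
    (levelCutoff_le_indicator hab)

end Cutoff

section Counting

variable {ι X : Type*} {p : ι → X} {s : Set X}

theorem summable_indicator_one_comp (hs : {i | p i ∈ s}.Finite) :
    Summable fun i => s.indicator (1 : X → ℝ) (p i) :=
  summable_of_hasFiniteSupport <| hs.subset fun _ => Set.mem_of_indicator_ne_zero

theorem tsum_indicator_one_comp (hs : {i | p i ∈ s}.Finite) :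
    ∑' i, s.indicator (1 : X → ℝ) (p i) = {i | p i ∈ s}.ncard := by
  rw [tsum_eq_sum (s := hs.toFinset) fun i hi => Set.indicator_of_notMem (by simpa using hi) _,
    Set.ncard_eq_toFinset_card _ hs, Finset.card_eq_sum_ones, Nat.cast_sum]
  exact Finset.sum_congr rfl fun i hi => by simp_all

theorem tsum_comp_mono_of_le_indicator {φ ψ : X → ℝ} (hφ : 0 ≤ φ) (hφψ : φ ≤ ψ)
    (hψ : ψ ≤ s.indicator (1 : X → ℝ)) (hs : {i | p i ∈ s}.Finite) :
    ∑' i, φ (p i) ≤ ∑' i, ψ (p i) := by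
  have hψ_sum : Summable fun i => ψ (p i) :=
    (summable_indicator_one_comp hs).of_nonneg_of_le (fun i => (hφ _).trans (hφψ _)) fun i => hψ _
  exact (hψ_sum.of_nonneg_of_le (fun i => hφ _) fun i => hφψ _).tsum_le_tsum (fun i => hφψ _)
    hψ_sum

end Counting

theorem counting_tendsto_of_vague_tendsto_general (n : ℕ) (d : ℝ)
    (x : ℕ → EuclideanSpace ℝ (Fin n))
    (ν : Measure (EuclideanSpace ℝ (Fin n)))
    [IsLocallyFiniteMeasure ν]
    (hν : ∀ t : ℝ, 0 < t → ∀ A : Set (EuclideanSpace ℝ (Fin n)), MeasurableSet A →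
      ν (t • A) = ENNReal.ofReal (t ^ d) * ν A)
    (h_fin : ∀ L : ℝ, 0 < L → ∀ C : Set (EuclideanSpace ℝ (Fin n)), IsCompact C →
      {i : ℕ | x i ∈ L • C}.Finite)
    (h_conv : ∀ g : EuclideanSpace ℝ (Fin n) → ℝ, Continuous g → HasCompactSupport g →
      Tendsto (fun L : ℝ => L ^ (-d) * ∑' i : ℕ, g (L⁻¹ • x i)) atTop
        (𝓝 (∫ y, g y ∂ν)))
    (f : EuclideanSpace ℝ (Fin n) → ℝ)
    (hf_cont : Continuous f)
    (hf_hom : ∀ t : ℝ, 0 < t → ∀ y, f (t • y) = t * f y)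
    (hf_pos : ∀ y : EuclideanSpace ℝ (Fin n), y ≠ 0 → 0 < f y) :
    Tendsto (fun L : ℝ => ({i : ℕ | f (x i) ≤ L}.ncard : ℝ) / L ^ d) atTop
      (𝓝 ((ν {y : EuclideanSpace ℝ (Fin n) | f y ≤ 1}).toReal)) := by
  set K := {y : EuclideanSpace ℝ (Fin n) | f y ≤ 1}
  have hK : ∀ t, IsCompact {y | f y ≤ t} := isCompact_setOf_le hf_cont hf_hom hf_pos
  have hfin : ∀ L : ℝ, 0 < L → ∀ t, {i | L⁻¹ • x i ∈ {y | f y ≤ t}}.Finite := fun L hL t => by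
    simpa only [Set.mem_smul_set_iff_inv_smul_mem₀ hL.ne'] using h_fin L hL _ (hK t)
  have hcount : ∀ L : ℝ, 0 < L → ({i | f (x i) ≤ L}.ncard : ℝ) / L ^ d =
      L ^ (-d) * ∑' i, K.indicator 1 (L⁻¹ • x i) := fun L hL => by
    simp only [tsum_indicator_one_comp (hfin L hL 1), Real.rpow_neg hL.le, div_eq_inv_mul, K,
      Set.mem_ofPred_eq, apply_inv_smul_le_iff hf_hom hL, mul_one]
  have hmeas : ∀ t > 0, ν.real {y | f y ≤ t} = t ^ d * ν.real K := fun t ht => by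
    rw [measureReal_def, ← smul_setOf_le_one hf_hom ht,
      hν t ht K (isClosed_le hf_cont continuous_const).measurableSet, ENNReal.toReal_mul,
      ENNReal.toReal_ofReal (by positivity), measureReal_def]
  rw [← measureReal_def]
  refine tendsto_of_forall_exists_tendsto_le (fun a ha => ?_) (fun a ha => ?_)
  · obtain ⟨t, ⟨ht0, ht1⟩, hat⟩ := exists_mem_Ioo_lt_rpow_mul d ha
    refine ⟨_, _, ?_, h_conv _ (continuous_levelCutoff hf_cont)
      (hasCompactSupport_levelCutoff hf_cont ht1.le (hK 1)), ?_⟩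
    · rw [← hmeas t ht0] at hat
      exact hat.trans_le (measureReal_le_integral_levelCutoff hf_cont ht1 (hK 1))
    · filter_upwards [eventually_gt_atTop 0] with L hL
      rw [hcount L hL]
      exact mul_le_mul_of_nonneg_left (tsum_comp_mono_of_le_indicator levelCutoff_nonneg
        (levelCutoff_le_indicator ht1.le) le_rfl (hfin L hL 1)) (by positivity)
  · obtain ⟨t, ht1, hat⟩ := exists_one_lt_rpow_mul_lt d ha
    refine ⟨_, _, ?_, h_conv _ (continuous_levelCutoff hf_cont)
      (hasCompactSupport_levelCutoff hf_cont ht1.le (hK t)), ?_⟩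
    · rw [← hmeas t (one_pos.trans ht1)] at hat
      exact (integral_levelCutoff_le_measureReal hf_cont ht1.le (hK t)).trans_lt hat
    · filter_upwards [eventually_gt_atTop 0] with L hL
      rw [hcount L hL]
      exact mul_le_mul_of_nonneg_left (tsum_comp_mono_of_le_indicator (Set.indicator_nonneg
        fun _ _ => zero_le_one) (indicator_le_levelCutoff ht1) (levelCutoff_le_indicator ht1.le)
        (hfin L hL t)) (by positivity)

/-- If the rescaled counting measures `L^{-d} ∑ᵢ δ_{xᵢ/L}` of a sequence `(xᵢ)` in `ℝ^n`
converge vaguely to a measure `ν` homogeneous of degree `d > 0`, then for every positive,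
continuous, positively 1-homogeneous function `f` the counting function satisfies
`#{i | f (xᵢ) ≤ L} / L^d → ν {f ≤ 1}`. -/
theorem counting_tendsto_of_vague_tendsto (n : ℕ) (hn : 1 ≤ n) (d : ℝ) (hd : 0 < d)
    (x : ℕ → EuclideanSpace ℝ (Fin n))
    (ν : Measure (EuclideanSpace ℝ (Fin n)))
    [IsLocallyFiniteMeasure ν]
    (hν : ∀ t : ℝ, 0 < t → ∀ A : Set (EuclideanSpace ℝ (Fin n)), MeasurableSet A →
      ν (t • A) = ENNReal.ofReal (t ^ d) * ν A)
    (h_fin : ∀ L : ℝ, 0 < L → ∀ C : Set (EuclideanSpace ℝ (Fin n)), IsCompact C →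
      {i : ℕ | x i ∈ L • C}.Finite)
    (h_conv : ∀ g : EuclideanSpace ℝ (Fin n) → ℝ, Continuous g → HasCompactSupport g →
      Tendsto (fun L : ℝ => L ^ (-d) * ∑' i : ℕ, g (L⁻¹ • x i)) atTop
        (𝓝 (∫ y, g y ∂ν)))
    (f : EuclideanSpace ℝ (Fin n) → ℝ)
    (hf_cont : Continuous f)
    (hf_hom : ∀ t : ℝ, 0 < t → ∀ y, f (t • y) = t * f y)
    (hf_pos : ∀ y : EuclideanSpace ℝ (Fin n), y ≠ 0 → 0 < f y) :
    Tendsto (fun L : ℝ => ({i : ℕ | f (x i) ≤ L}.ncard : ℝ) / L ^ d) atTop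
      (𝓝 ((ν {y : EuclideanSpace ℝ (Fin n) | f y ≤ 1}).toReal)) :=
  counting_tendsto_of_vague_tendsto_general n d x ν hν h_fin h_conv f hf_cont hf_hom hf_pos
end

section
/- Let n ≥ 1, let d > 0, let (x_i)_{i∈ℕ} be a sequence in ℝ^n, and let q : ℝ^n → [0, ∞) be continuous with q(t • x) = t² · q(x) for all t > 0 and all x, and suppose q(x_i) = q(x_0) for all i. For L > 0 set ν_L = L^{−d} ∑_i δ_{x_i / L}, and assume that for every compact C ⊆ ℝ^n one has sup_{L ≥ 1} ν_L(C) < ∞. Suppose L_j → ∞ is a sequence and ν is a locally finite Borel measure on ℝ^n such that ∫ g dν_{L_j} → ∫ g dν for every continuous compactly supported g : ℝ^n → ℝ. Then ν({x | q(x) > 0}) = 0, i.e. ν is supported on the zero set of q. -/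
open MeasureTheory Filter Topology

/-!
By homogeneity the atoms `xᵢ / L` of `ν_L` lie on the level set `{q = q x₀ / L²}`, which
approaches the zero set of `q`. A continuous test function supported in the open set `{q > 0}`
is supported in `{q ≥ ε}` for some `ε > 0` by compactness, so it vanishes at every atom once `L`
is large, and its integral against the vague limit `ν` is `0`. As `ν` is regular, Urysohn's lemma
turns this into `ν {q > 0} = 0`.
-/

theorem IsOpen.measure_eq_zero_of_integral_eq_zero {X : Type*} [TopologicalSpace X]
    [MeasurableSpace X] [BorelSpace X] [LocallyCompactSpace X] [R1Space X]
    {μ : Measure X} [μ.Regular] {U : Set X} (hU : IsOpen U)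
    (h : ∀ g : X → ℝ, Continuous g → HasCompactSupport g → tsupport g ⊆ U → ∫ x, g x ∂μ = 0) :
    μ U = 0 := by
  rw [hU.measure_eq_iSup_isCompact μ]
  simp only [ENNReal.iSup_eq_zero]
  intro K hKU hK
  obtain ⟨g, hgK, hgc, hgU, hg01⟩ := exists_continuousMap_one_of_isCompact_subset_isOpen hK hU hKU
  refine nonpos_iff_eq_zero.1 ?_
  calc μ K ≤ ENNReal.ofReal (∫ x, g x ∂μ) :=
        (g.continuous.integrable_of_hasCompactSupport hgc).measure_le_integral
          (.of_forall fun x => (hg01 x).1) fun x hx => (hgK hx).ge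
    _ = 0 := by rw [h g g.continuous hgc hgU, ENNReal.ofReal_zero]

theorem integral_smul_sum_dirac_eq_zero {α ι : Type*} [MeasurableSpace α]
    [MeasurableSingletonClass α] [Countable ι] {y : ι → α} {g : α → ℝ}
    (hg : ∀ i, g (y i) = 0) (c : ENNReal) :
    ∫ a, g a ∂(c • Measure.sum fun i => Measure.dirac (y i)) = 0 :=
  integral_eq_zero_of_ae <| Measure.ae_smul_measure (Measure.ae_sum_iff.2 fun i => by
    simpa [ae_dirac_eq] using hg i) c

theorem eventually_forall_inv_smul_lt_of_homogeneous {E ι : Type*} [SMul ℝ E] {q : E → ℝ}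
    (hq_hom : ∀ t : ℝ, 0 < t → ∀ y, q (t • y) = t ^ 2 * q y) {x : ι → E} {c : ℝ}
    (hq_const : ∀ i, q (x i) = c) {ε : ℝ} (hε : 0 < ε) :
    ∀ᶠ L : ℝ in atTop, ∀ i, q (L⁻¹ • x i) < ε := by
  have h_lim : Tendsto (fun L : ℝ => L⁻¹ ^ 2 * c) atTop (𝓝 0) := by
    simpa using (tendsto_inv_atTop_zero.pow 2).mul_const c
  filter_upwards [h_lim.eventually (gt_mem_nhds hε), eventually_gt_atTop 0] with L hL hL0 i
  rwa [hq_hom _ (inv_pos.2 hL0), hq_const]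

theorem vague_limit_supported_on_zero_set_general (n : ℕ) (d : ℝ)
    (x : ℕ → EuclideanSpace ℝ (Fin n))
    (q : EuclideanSpace ℝ (Fin n) → ℝ)
    (hq_cont : Continuous q)
    (hq_hom : ∀ t : ℝ, 0 < t → ∀ y, q (t • y) = t ^ 2 * q y)
    (hq_const : ∀ i, q (x i) = q (x 0))
    (νL : ℝ → Measure (EuclideanSpace ℝ (Fin n)))
    (hνL : ∀ L : ℝ, νL L =
      ENNReal.ofReal (L ^ (-d)) • Measure.sum (fun i : ℕ => Measure.dirac (L⁻¹ • x i)))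
    (Lseq : ℕ → ℝ) (hLseq : Tendsto Lseq atTop atTop)
    (ν : Measure (EuclideanSpace ℝ (Fin n)))
    [IsLocallyFiniteMeasure ν]
    (h_conv : ∀ g : EuclideanSpace ℝ (Fin n) → ℝ, Continuous g → HasCompactSupport g →
      Tendsto (fun j => ∫ y, g y ∂(νL (Lseq j))) atTop (𝓝 (∫ y, g y ∂ν))) :
    ν {y : EuclideanSpace ℝ (Fin n) | 0 < q y} = 0 := by
  refine (isOpen_lt continuous_const hq_cont).measure_eq_zero_of_integral_eq_zero
    fun g hg hgc hgU => ?_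
  obtain ⟨ε, hε, hεg⟩ := hgc.isCompact.exists_forall_le' hq_cont.continuousOn fun y hy => hgU hy
  refine tendsto_nhds_unique (h_conv g hg hgc) (tendsto_const_nhds.congr' ?_)
  filter_upwards [hLseq.eventually
    (eventually_forall_inv_smul_lt_of_homogeneous hq_hom hq_const hε)] with j hj
  rw [hνL, integral_smul_sum_dirac_eq_zero]
  exact fun i => image_eq_zero_of_notMem_tsupport fun hi => (hj i).not_ge (hεg _ hi)

/-- If `q` is a continuous nonnegative 2-homogeneous function which is constant on the
sequence `(xᵢ)`, and the rescaled counting measures `ν_L = L^{-d} ∑ᵢ δ_{xᵢ/L}` have masses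
uniformly bounded on compacts and converge vaguely along some sequence `L_j → ∞` to a
locally finite measure `ν`, then `ν` is supported on the zero set of `q`. -/
theorem vague_limit_supported_on_zero_set (n : ℕ) (hn : 1 ≤ n) (d : ℝ) (hd : 0 < d)
    (x : ℕ → EuclideanSpace ℝ (Fin n))
    (q : EuclideanSpace ℝ (Fin n) → ℝ)
    (hq_cont : Continuous q)
    (hq_nonneg : ∀ y, 0 ≤ q y)
    (hq_hom : ∀ t : ℝ, 0 < t → ∀ y, q (t • y) = t ^ 2 * q y)
    (hq_const : ∀ i, q (x i) = q (x 0))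
    (νL : ℝ → Measure (EuclideanSpace ℝ (Fin n)))
    (hνL : ∀ L : ℝ, νL L =
      ENNReal.ofReal (L ^ (-d)) • Measure.sum (fun i : ℕ => Measure.dirac (L⁻¹ • x i)))
    (h_bdd : ∀ C : Set (EuclideanSpace ℝ (Fin n)), IsCompact C →
      ∃ M : ENNReal, M < ⊤ ∧ ∀ L : ℝ, 1 ≤ L → νL L C ≤ M)
    (Lseq : ℕ → ℝ) (hLseq : Tendsto Lseq atTop atTop)
    (ν : Measure (EuclideanSpace ℝ (Fin n)))
    [IsLocallyFiniteMeasure ν]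
    (h_conv : ∀ g : EuclideanSpace ℝ (Fin n) → ℝ, Continuous g → HasCompactSupport g →
      Tendsto (fun j => ∫ y, g y ∂(νL (Lseq j))) atTop (𝓝 (∫ y, g y ∂ν))) :
    ν {y : EuclideanSpace ℝ (Fin n) | 0 < q y} = 0 :=
  vague_limit_supported_on_zero_set_general n d x q hq_cont hq_hom hq_const νL hνL Lseq hLseq ν
    h_conv
end
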